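/- Let G be a finite simple graph on vertex set V that is strongly regular with parameters (N, k, λ, μ), k ≥ 1, and let M = k⁻¹·A be its random-walk matrix. Then for any two vertices u and u', the multiset over v ∈ V of the sequences (n ↦ (Mⁿ)_{u,v}) equals the multiset over v ∈ V of the sequences (n ↦ (Mⁿ)_{u',v}); that is, every vertex of a strongly regular graph sees the same multiset of full RRWP profiles, so the GD-WL colouring based on RRWP is constant across vertices. -/

import Mathlib

/-!
The matrices `1`, `A` and the adjacency matrix `Aᶜ` of the complement span a space that is
closed under left multiplication by `A`: `A² = k + ℓ A + μ Aᶜ`, and `A Aᶜ = (k - 1 - ℓ) A + (k - μ) Aᶜ`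
because `A J = k J` for the all-ones matrix `J = 1 + A + Aᶜ`. Hence every power of `M = k⁻¹ A`
has the form `a • 1 + b • A + c • Aᶜ`, so the profile of `(u, v)` only depends on whether `v = u`,
`v ~ u` or neither, and every vertex has `1`, `k` and `N - 1 - k` vertices of these three kinds.
-/

open Matrix

namespace SimpleGraph

variable {V α : Type*}

theorem IsRegularOfDegree.adjMatrix_mul_of_one [Fintype V] {G : SimpleGraph V}
    [DecidableRel G.Adj] [NonAssocSemiring α] {k : ℕ} (hG : G.IsRegularOfDegree k) :
    G.adjMatrix α * of 1 = (k : α) • of 1 := by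
  ext u v
  simp [adjMatrix_mul_apply, hG u]

variable [DecidableEq V]

theorem one_add_adjMatrix_add_adjMatrix_compl [AddMonoidWithOne α] (G : SimpleGraph V)
    [DecidableRel G.Adj] : 1 + G.adjMatrix α + Gᶜ.adjMatrix α = of 1 := by
  ext u v
  by_cases huv : u = v
  · subst huv; simp
  · by_cases hadj : G.Adj u v <;> simp [one_apply, huv, hadj]

variable {G : SimpleGraph V} [DecidableRel G.Adj]

theorem smul_one_add_smul_adjMatrix_add_smul_adjMatrix_compl_apply [Semiring α] (a b c : α)
    (u v : V) : (a • 1 + b • G.adjMatrix α + c • Gᶜ.adjMatrix α) u v =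
      if u = v then a else if G.Adj u v then b else c := by
  by_cases huv : u = v
  · subst huv; simp
  · by_cases hadj : G.Adj u v <;> simp [one_apply, huv, hadj]

variable [Fintype V]

theorem IsSRGWith.adjMatrix_mul_adjMatrix_compl [CommRing α] {n k ℓ μ : ℕ}
    (h : G.IsSRGWith n k ℓ μ) :
    G.adjMatrix α * Gᶜ.adjMatrix α =
      ((k : α) - 1 - ℓ) • G.adjMatrix α + ((k : α) - μ) • Gᶜ.adjMatrix α := by
  have hJ := h.regular.adjMatrix_mul_of_one (α := α)
  rw [← one_add_adjMatrix_add_adjMatrix_compl G, mul_add, mul_add, mul_one, ← sq,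
    h.matrix_eq] at hJ
  simp only [← Nat.cast_smul_eq_nsmul α] at hJ
  linear_combination (norm := module) hJ

theorem IsSRGWith.exists_adjMatrix_pow_eq [CommRing α] {n k ℓ μ : ℕ}
    (h : G.IsSRGWith n k ℓ μ) (m : ℕ) :
    ∃ a b c : α, G.adjMatrix α ^ m = a • 1 + b • G.adjMatrix α + c • Gᶜ.adjMatrix α := by
  induction m with
  | zero => exact ⟨1, 0, 0, by simp⟩
  | succ m ih =>
    obtain ⟨a, b, c, hm⟩ := ih
    refine ⟨b * k, a + b * ℓ + c * (k - 1 - ℓ), b * μ + c * (k - μ), ?_⟩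
    rw [pow_succ', hm, mul_add, mul_add, Matrix.mul_smul, Matrix.mul_smul, Matrix.mul_smul,
      mul_one, ← sq, h.matrix_eq, h.adjMatrix_mul_adjMatrix_compl]
    simp only [← Nat.cast_smul_eq_nsmul α]
    module

theorem IsRegularOfDegree.map_univ_ite_eq {β : Type*} {k : ℕ} (hG : G.IsRegularOfDegree k)
    (u : V) (x y z : β) :
    Finset.univ.val.map (fun v => if u = v then x else if G.Adj u v then y else z) =
      x ::ₘ (Multiset.replicate k y + Multiset.replicate (Fintype.card V - 1 - k) z) := by
  have hnbr : (Finset.univ.erase u).filter (G.Adj u) = G.neighborFinset u := by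
    ext v
    simpa using fun h : G.Adj u v => h.ne'
  have hcard : ((Finset.univ.erase u).filter (G.Adj u)).card = k := by
    rw [hnbr, card_neighborFinset_eq_degree, hG u]
  have hcard' : ((Finset.univ.erase u).filter (¬G.Adj u ·)).card = Fintype.card V - 1 - k := by
    have := Finset.card_filter_add_card_filter_not (s := Finset.univ.erase u) (p := G.Adj u)
    rw [Finset.card_erase_of_mem (Finset.mem_univ u), Finset.card_univ] at this
    omega
  rw [← Finset.insert_erase (Finset.mem_univ u),
    Finset.insert_val_of_notMem (Finset.notMem_erase u _), Multiset.map_cons, if_pos rfl,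
    ← Multiset.filter_add_not (G.Adj u) (Finset.univ.erase u).val, Multiset.map_add]
  congr 2
  · refine Multiset.eq_replicate.mpr ⟨by rw [Multiset.card_map]; exact hcard, ?_⟩
    simp only [Multiset.mem_map, Multiset.mem_filter]
    rintro _ ⟨v, hv, rfl⟩
    rw [if_neg (Finset.ne_of_mem_erase hv.1).symm, if_pos hv.2]
  · refine Multiset.eq_replicate.mpr ⟨by rw [Multiset.card_map]; exact hcard', ?_⟩
    simp only [Multiset.mem_map, Multiset.mem_filter]
    rintro _ ⟨v, hv, rfl⟩
    rw [if_neg (Finset.ne_of_mem_erase hv.1).symm, if_neg hv.2]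

end SimpleGraph

theorem srg_rrwp_profile_multiset_eq_general
    {V : Type*} [Fintype V] [DecidableEq V]
    (G : SimpleGraph V) [DecidableRel G.Adj]
    (N k ℓ μ : ℕ) (h : G.IsSRGWith N k ℓ μ)
    (M : Matrix V V ℝ) (hM : M = (k : ℝ)⁻¹ • G.adjMatrix ℝ) :
    ∀ u u' : V,
      (Finset.univ.val.map fun v : V => (fun n : ℕ => (M ^ n) u v)) =
      (Finset.univ.val.map fun v : V => (fun n : ℕ => (M ^ n) u' v)) := by
  choose a b c hpow using h.exists_adjMatrix_pow_eq (α := ℝ)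
  have hprofile : ∀ u v : V, (fun n : ℕ => (M ^ n) u v) =
      if u = v then fun n => (k : ℝ)⁻¹ ^ n * a n
      else if G.Adj u v then fun n => (k : ℝ)⁻¹ ^ n * b n
      else fun n => (k : ℝ)⁻¹ ^ n * c n := by
    intro u v
    funext n
    rw [hM, smul_pow, Matrix.smul_apply, hpow,
      SimpleGraph.smul_one_add_smul_adjMatrix_add_smul_adjMatrix_compl_apply, smul_eq_mul]
    split_ifs <;> rfl
  intro u u'
  simp only [hprofile, h.regular.map_univ_ite_eq]

/-- In a strongly regular graph, every vertex sees the same multiset of full RRWP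
profiles: for any two vertices `u, u'`, the multiset over `v` of the sequences
`n ↦ (Mⁿ)_{u,v}` (where `M = k⁻¹ • A` is the random-walk matrix) equals the corresponding
multiset for `u'`.  Hence the GD-WL colouring based on RRWP is constant across vertices. -/
theorem srg_rrwp_profile_multiset_eq
    {V : Type*} [Fintype V] [DecidableEq V]
    (G : SimpleGraph V) [DecidableRel G.Adj]
    (N k ℓ μ : ℕ) (hk : 1 ≤ k) (h : G.IsSRGWith N k ℓ μ)
    (M : Matrix V V ℝ) (hM : M = (k : ℝ)⁻¹ • G.adjMatrix ℝ) :
    ∀ u u' : V,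
      (Finset.univ.val.map fun v : V => (fun n : ℕ => (M ^ n) u v)) =
      (Finset.univ.val.map fun v : V => (fun n : ℕ => (M ^ n) u' v)) :=
  srg_rrwp_profile_multiset_eq_general G N k ℓ μ h M hM
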